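/- Suppose for positive constants σ, τ, c, and functions satisfying n(ε,d) ≥ (1−ε²) ∏_{j=1}^d (1+c·γ_j) for all d ∈ ℕ and ε ∈ (0,1), where γ_j ∈ (0,1], that lim_{d+1/ε→∞} ln n(ε,d)/(d^σ + ε^{-τ}) = 0. Then lim_{d→∞} d^{-σ} Σ_{j=1}^d γ_j = 0. -/

import Mathlib

open Filter Real

/-
Take `ε = 1/2`. By concavity of the logarithm, `γ ln(1 + c) ≤ ln(1 + c γ)` for `γ ∈ [0, 1]`, so
the lower bound gives `ln(1 + c) Σ_{j<d} γ_j ≤ ln(4/3) + ln n(1/2, d)`. Weak tractability bounds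
the right-hand side by `δ (d^σ + 2^τ) + ln(4/3)` for large `d`, whence `Σ_{j<d} γ_j / d^σ` is
eventually below any positive number.
-/

theorem mul_log_one_add_le_log_one_add_mul {c x : ℝ} (hc : -1 < c) (hx₀ : 0 ≤ x) (hx₁ : x ≤ 1) :
    x * log (1 + c) ≤ log (1 + c * x) := by
  have hbernoulli := rpow_one_add_le_one_add_mul_self hc.le hx₀ hx₁
  calc x * log (1 + c) = log ((1 + c) ^ x) := (log_rpow (by linarith) x).symm
    _ ≤ log (1 + c * x) := log_le_log (rpow_pos_of_pos (by linarith) x) (by linarith)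

theorem sum_mul_log_one_add_le_log_prod {ι : Type*} (s : Finset ι) {c : ℝ} (hc : 0 ≤ c)
    {γ : ι → ℝ} (hγ : ∀ j ∈ s, γ j ∈ Set.Icc (0 : ℝ) 1) :
    (∑ j ∈ s, γ j) * log (1 + c) ≤ log (∏ j ∈ s, (1 + c * γ j)) := by
  have hpos : ∀ j ∈ s, 0 < 1 + c * γ j := fun j hj => by
    have := (hγ j hj).1; positivity
  rw [log_prod fun j hj => (hpos j hj).ne', Finset.sum_mul]
  exact Finset.sum_le_sum fun j hj =>
    mul_log_one_add_le_log_one_add_mul (by linarith) (hγ j hj).1 (hγ j hj).2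

theorem tendsto_div_nhds_zero_of_le_mul_add {α : Type*} {l : Filter α} {f g : α → ℝ}
    (hf : ∀ᶠ x in l, 0 ≤ f x) (hg : Tendsto g l atTop)
    (hfg : ∀ δ > 0, ∃ C, ∀ᶠ x in l, f x ≤ δ * g x + C) :
    Tendsto (fun x => f x / g x) l (nhds 0) := by
  refine tendsto_order.2 ⟨fun a ha => ?_, fun b hb => ?_⟩
  · filter_upwards [hf, hg.eventually_gt_atTop 0] with x hfx hgx
    exact ha.trans_le (div_nonneg hfx hgx.le)
  · obtain ⟨C, hC⟩ := hfg (b / 2) (half_pos hb)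
    filter_upwards [hC, hg.eventually_gt_atTop 0, hg.eventually_gt_atTop (2 * C / b)]
      with x hfx hgx hgC
    rw [div_lt_iff₀ hgx]
    rw [div_lt_iff₀ hb] at hgC
    linarith

theorem stmt15_general (σ τ c : ℝ) (hσ : 0 < σ) (hc : 0 < c)
    (γ : ℕ → ℝ) (hγ : ∀ j, γ j ∈ Set.Ioc (0 : ℝ) 1) (n : ℝ → ℕ → ℕ)
    (hlow : ∀ ε ∈ Set.Ioo (0 : ℝ) 1, ∀ d : ℕ,
      (1 - ε ^ 2) * ∏ j ∈ Finset.range d, (1 + c * γ j) ≤ (n ε d : ℝ))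
    (hwt : ∀ δ : ℝ, 0 < δ → ∃ M : ℝ, ∀ ε ∈ Set.Ioo (0 : ℝ) 1, ∀ d : ℕ,
      M ≤ (d : ℝ) + 1 / ε →
        Real.log (n ε d) < δ * ((d : ℝ) ^ σ + ε ^ (-τ))) :
    Tendsto (fun d : ℕ => (∑ j ∈ Finset.range d, γ j) / (d : ℝ) ^ σ) atTop (nhds 0) := by
  have hL : 0 < log (1 + c) := log_pos (by linarith)
  have hhalf : (1 / 2 : ℝ) ∈ Set.Ioo 0 1 := by norm_num
  refine tendsto_div_nhds_zero_of_le_mul_add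
    (Eventually.of_forall fun d => Finset.sum_nonneg fun j _ => (hγ j).1.le)
    ((tendsto_rpow_atTop hσ).comp tendsto_natCast_atTop_atTop) fun δ hδ => ?_
  obtain ⟨M, hM⟩ := hwt (δ * log (1 + c)) (by positivity)
  refine ⟨δ * (1 / 2 : ℝ) ^ (-τ) + log (4 / 3) / log (1 + c), ?_⟩
  filter_upwards [tendsto_natCast_atTop_atTop.eventually_ge_atTop (M - 2)] with d hd
  have hprod : 0 < ∏ j ∈ Finset.range d, (1 + c * γ j) :=
    Finset.prod_pos fun j _ => by have := (hγ j).1; positivity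
  have hn : 3 / 4 * ∏ j ∈ Finset.range d, (1 + c * γ j) ≤ n (1 / 2) d := by
    convert hlow _ hhalf d using 2; norm_num
  have hlog_lower :
      log (3 / 4) + log (∏ j ∈ Finset.range d, (1 + c * γ j)) ≤ log (n (1 / 2) d) := by
    rw [← log_mul (by norm_num) hprod.ne']
    exact log_le_log (by positivity) hn
  have hlog_upper := hM _ hhalf d (by norm_num; linarith)
  have hsum := sum_mul_log_one_add_le_log_prod (Finset.range d) hc.le
    fun j _ => Set.Ioc_subset_Icc_self (hγ j)
  have hlog : log (3 / 4) = -log (4 / 3) := by rw [← log_inv]; norm_num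
  refine le_of_mul_le_mul_right ?_ hL
  rw [add_mul, add_mul, div_mul_cancel₀ _ hL.ne']
  linarith

/-- If the information complexity satisfies `n(ε,d) ≥ (1-ε²) ∏_{j=1}^d (1+c γ_j)` and the
problem is `(σ,τ)`-weakly tractable (`ln n(ε,d)/(d^σ+ε^{-τ}) → 0` as `d+1/ε → ∞`), then
`d^{-σ} Σ_{j=1}^d γ_j → 0`. -/
theorem stmt15 (σ τ c : ℝ) (hσ : 0 < σ) (hτ : 0 < τ) (hc : 0 < c)
    (γ : ℕ → ℝ) (hγ : ∀ j, γ j ∈ Set.Ioc (0 : ℝ) 1) (n : ℝ → ℕ → ℕ)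
    (hlow : ∀ ε ∈ Set.Ioo (0 : ℝ) 1, ∀ d : ℕ,
      (1 - ε ^ 2) * ∏ j ∈ Finset.range d, (1 + c * γ j) ≤ (n ε d : ℝ))
    (hwt : ∀ δ : ℝ, 0 < δ → ∃ M : ℝ, ∀ ε ∈ Set.Ioo (0 : ℝ) 1, ∀ d : ℕ,
      M ≤ (d : ℝ) + 1 / ε →
        Real.log (n ε d) < δ * ((d : ℝ) ^ σ + ε ^ (-τ))) :
    Tendsto (fun d : ℕ => (∑ j ∈ Finset.range d, γ j) / (d : ℝ) ^ σ) atTop (nhds 0) :=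
  stmt15_general σ τ c hσ hc γ hγ n hlow hwt
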